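/- arXiv:0710.1466 — 2 statements merged into one kernel-verified Lean document; each statement's English description precedes it below -/
import Mathlib

section
/- For n ≥ 2, the function E(r) = ∫₀^∞ e^{-ry} y^{(n-3)/2} ((y+2i)^{(n-3)/2} - (2i)^{(n-3)/2}) dy satisfies |E(r)| ≤ C_n r^{-(n+1)/2} for all r ≥ 1, with a constant C_n depending only on n. -/
/-!
On the segment from `2i` to `y + 2i` the modulus stays in `[2, y + 2]`, so the mean value
theorem for `z ↦ z^α` bounds the bracket by `|α| (y + 2)^{|α - 1|} y`. For `r ≥ 1` the
polynomial factor is absorbed by `e^{y/2} ≤ e^{ry/2}`, leaving the integrand below a multiple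
of `y^{α+1} e^{-ry/2}`, whose integral is `Γ(α + 2) (2/r)^{α+2}`. With `α = (n-3)/2` this is
`r^{-(n+1)/2}`.
-/

open MeasureTheory Complex

/-- The Bessel error integral
`E(r) = ∫₀^∞ e^{-ry} y^{(n-3)/2} ((y+2i)^{(n-3)/2} - (2i)^{(n-3)/2}) dy`,
with principal-branch complex powers. -/
noncomputable def besselErr (n : ℕ) (r : ℝ) : ℂ :=
  ∫ y in Set.Ioi (0 : ℝ),
    Complex.exp (-(r * y)) * (y : ℂ) ^ ((((n : ℝ) - 3) / 2 : ℝ) : ℂ) *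
      (((y : ℂ) + 2 * Complex.I) ^ ((((n : ℝ) - 3) / 2 : ℝ) : ℂ) -
        (2 * Complex.I) ^ ((((n : ℝ) - 3) / 2 : ℝ) : ℂ))

theorem Real.rpow_le_rpow_abs_of_one_le {x R : ℝ} (β : ℝ) (hx : 1 ≤ x) (hxR : x ≤ R) :
    x ^ β ≤ R ^ |β| :=
  (Real.rpow_le_rpow_of_exponent_le hx (le_abs_self β)).trans
    (Real.rpow_le_rpow (by linarith) hxR (abs_nonneg β))

theorem Real.exists_add_two_rpow_le_mul_exp_half (p : ℝ) :
    ∃ C, 0 < C ∧ ∀ y : ℝ, 0 ≤ y → (y + 2) ^ p ≤ C * Real.exp (y / 2) := by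
  set m := ⌈p⌉₊
  refine ⟨2 ^ m * m.factorial * Real.exp 1, by positivity, fun y hy => ?_⟩
  have hfac := Real.pow_div_factorial_le_exp (y / 2 + 1) (by positivity) m
  rw [div_le_iff₀ (by positivity)] at hfac
  calc (y + 2) ^ p ≤ (y + 2) ^ (m : ℝ) :=
        Real.rpow_le_rpow_of_exponent_le (by linarith) (Nat.le_ceil p)
    _ = 2 ^ m * (y / 2 + 1) ^ m := by rw [Real.rpow_natCast, ← mul_pow]; ring_nf
    _ ≤ 2 ^ m * (Real.exp (y / 2 + 1) * m.factorial) := by gcongr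
    _ = 2 ^ m * m.factorial * Real.exp 1 * Real.exp (y / 2) := by rw [Real.exp_add]; ring

theorem Complex.norm_cpow_sub_cpow_le (α : ℝ) {z w : ℂ} {M : ℝ}
    (hslit : segment ℝ z w ⊆ slitPlane) (hM : ∀ u ∈ segment ℝ z w, ‖u‖ ^ (α - 1) ≤ M) :
    ‖w ^ (α : ℂ) - z ^ (α : ℂ)‖ ≤ |α| * M * ‖w - z‖ := by
  refine Convex.norm_image_sub_le_of_norm_hasDerivWithin_le
    (fun u hu => (hasStrictDerivAt_cpow_const (hslit hu)).hasDerivAt.hasDerivWithinAt)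
    (fun u hu => ?_) (convex_segment z w) (left_mem_segment ℝ z w) (right_mem_segment ℝ z w)
  have hcast : (α : ℂ) - 1 = ((α - 1 : ℝ) : ℂ) := by push_cast; ring
  rw [norm_mul, hcast, norm_cpow_real, norm_real, Real.norm_eq_abs]
  exact mul_le_mul_of_nonneg_left (hM u hu) (abs_nonneg α)

theorem Complex.im_eq_two_and_norm_le_of_mem_segment {y : ℝ} (hy : 0 ≤ y) {u : ℂ}
    (hu : u ∈ segment ℝ (2 * I) (y + 2 * I)) : u.im = 2 ∧ ‖u‖ ≤ y + 2 := by
  rw [segment_eq_image'] at hu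
  obtain ⟨θ, ⟨hθ0, hθ1⟩, rfl⟩ := hu
  simp only [add_sub_cancel_right, real_smul, ← ofReal_mul]
  refine ⟨by simp, (norm_add_le _ _).trans ?_⟩
  rw [norm_real, Real.norm_of_nonneg (by positivity)]
  simp only [norm_mul, RCLike.norm_ofNat, norm_I]
  nlinarith

theorem Complex.norm_add_two_I_cpow_sub_le (α : ℝ) {y : ℝ} (hy : 0 ≤ y) :
    ‖((y : ℂ) + 2 * I) ^ (α : ℂ) - (2 * I) ^ (α : ℂ)‖ ≤ |α| * (y + 2) ^ |α - 1| * y := by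
  have hseg := fun u (hu : u ∈ segment ℝ (2 * I) (y + 2 * I)) =>
    im_eq_two_and_norm_le_of_mem_segment hy hu
  have one_le_norm : ∀ u ∈ segment ℝ (2 * I) (y + 2 * I), 1 ≤ ‖u‖ := fun u hu => by
    have := abs_im_le_norm u
    rw [(hseg u hu).1] at this
    norm_num at this
    linarith
  have h := norm_cpow_sub_cpow_le α (M := (y + 2) ^ |α - 1|)
    (fun u hu => mem_slitPlane_iff.2 (Or.inr (by rw [(hseg u hu).1]; norm_num)))
    (fun u hu => Real.rpow_le_rpow_abs_of_one_le _ (one_le_norm u hu) (hseg u hu).2)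
  rwa [add_sub_cancel_right, norm_real, Real.norm_of_nonneg hy] at h

noncomputable def besselErrAt (α r : ℝ) : ℂ :=
  ∫ y in Set.Ioi (0 : ℝ), Complex.exp (-(r * y)) * (y : ℂ) ^ (α : ℂ) *
    (((y : ℂ) + 2 * I) ^ (α : ℂ) - (2 * I) ^ (α : ℂ))

theorem besselErr_eq_besselErrAt (n : ℕ) (r : ℝ) :
    besselErr n r = besselErrAt (((n : ℝ) - 3) / 2) r :=
  rfl

theorem integrableOn_rpow_mul_exp_neg_mul_Ioi {a r : ℝ} (ha : 0 < a) (hr : 0 < r) :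
    IntegrableOn (fun t : ℝ => t ^ (a - 1) * Real.exp (-(r * t))) (Set.Ioi 0) :=
  Integrable.of_integral_ne_zero <| by
    rw [Real.integral_rpow_mul_exp_neg_mul_Ioi ha hr]
    exact (mul_pos (by positivity) (Real.Gamma_pos_of_pos ha)).ne'

theorem norm_besselErrAt_integrand_le {α r C y : ℝ} (hr : 1 ≤ r) (hy : 0 < y)
    (hC : (y + 2) ^ |α - 1| ≤ C * Real.exp (y / 2)) :
    ‖Complex.exp (-(r * y)) * (y : ℂ) ^ (α : ℂ) *
        (((y : ℂ) + 2 * I) ^ (α : ℂ) - (2 * I) ^ (α : ℂ))‖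
      ≤ |α| * C * (y ^ (α + 2 - 1) * Real.exp (-(r / 2 * y))) := by
  rw [norm_mul, norm_mul, norm_exp, norm_cpow_eq_rpow_re_of_pos hy]
  simp only [neg_re, ← ofReal_mul, ofReal_re]
  have hdiff := (norm_add_two_I_cpow_sub_le α hy.le).trans
    (by gcongr : |α| * (y + 2) ^ |α - 1| * y ≤ |α| * (C * Real.exp (y / 2)) * y)
  calc Real.exp (-(r * y)) * y ^ α * ‖((y : ℂ) + 2 * I) ^ (α : ℂ) - (2 * I) ^ (α : ℂ)‖
      ≤ Real.exp (-(r * y)) * y ^ α * (|α| * (C * Real.exp (y / 2)) * y) :=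
        mul_le_mul_of_nonneg_left hdiff (by positivity)
    _ = |α| * C * (y ^ (α + 2 - 1) * Real.exp (-(r * y) + y / 2)) := by
      rw [Real.exp_add, show α + 2 - 1 = α + 1 by ring, Real.rpow_add_one hy.ne']; ring
    _ ≤ |α| * C * (y ^ (α + 2 - 1) * Real.exp (-(r / 2 * y))) := by
      have hC0 : 0 ≤ C := ((mul_pos_iff_of_pos_right (Real.exp_pos _)).1
        ((by positivity : 0 < (y + 2) ^ |α - 1|).trans_le hC)).le
      gcongr
      nlinarith

theorem norm_besselErrAt_le {α r C : ℝ} (hα : -2 < α) (hr : 1 ≤ r)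
    (hC : ∀ y : ℝ, 0 ≤ y → (y + 2) ^ |α - 1| ≤ C * Real.exp (y / 2)) :
    ‖besselErrAt α r‖ ≤ |α| * C * ((2 / r) ^ (α + 2) * Real.Gamma (α + 2)) := by
  have hα2 : 0 < α + 2 := by linarith
  have hr2 : 0 < r / 2 := by linarith
  calc ‖besselErrAt α r‖
      ≤ ∫ y in Set.Ioi (0 : ℝ), |α| * C * (y ^ (α + 2 - 1) * Real.exp (-(r / 2 * y))) :=
        norm_integral_le_of_norm_le
          ((integrableOn_rpow_mul_exp_neg_mul_Ioi hα2 hr2).const_mul _)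
          ((ae_restrict_mem measurableSet_Ioi).mono fun y (hy : 0 < y) =>
            norm_besselErrAt_integrand_le hr hy (hC y hy.le))
    _ = |α| * C * ((2 / r) ^ (α + 2) * Real.Gamma (α + 2)) := by
      rw [integral_const_mul, Real.integral_rpow_mul_exp_neg_mul_Ioi hα2 hr2, one_div_div]

theorem exists_norm_besselErrAt_le {α : ℝ} (hα : -2 < α) :
    ∃ K : ℝ, 0 < K ∧ ∀ r : ℝ, 1 ≤ r → ‖besselErrAt α r‖ ≤ K * r ^ (-(α + 2)) := by
  obtain ⟨C, hC0, hC⟩ := Real.exists_add_two_rpow_le_mul_exp_half |α - 1|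
  have hΓ := Real.Gamma_pos_of_pos (show 0 < α + 2 by linarith)
  refine ⟨(|α| + 1) * C * 2 ^ (α + 2) * Real.Gamma (α + 2), by positivity, fun r hr => ?_⟩
  have hr0 : 0 < r := by linarith
  calc ‖besselErrAt α r‖ ≤ |α| * C * ((2 / r) ^ (α + 2) * Real.Gamma (α + 2)) :=
        norm_besselErrAt_le hα hr hC
    _ ≤ (|α| + 1) * C * ((2 / r) ^ (α + 2) * Real.Gamma (α + 2)) := by gcongr; linarith
    _ = (|α| + 1) * C * 2 ^ (α + 2) * Real.Gamma (α + 2) * r ^ (-(α + 2)) := by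
      rw [Real.div_rpow zero_le_two hr0.le, Real.rpow_neg hr0.le]; ring

theorem besselErr_bound_general (n : ℕ) :
    ∃ C : ℝ, 0 < C ∧ ∀ r : ℝ, 1 ≤ r →
      ‖besselErr n r‖ ≤ C * r ^ (-((n : ℝ) + 1) / 2) := by
  obtain ⟨C, hC, hbound⟩ := exists_norm_besselErrAt_le (α := ((n : ℝ) - 3) / 2)
    (by linarith [n.cast_nonneg (α := ℝ)])
  refine ⟨C, hC, fun r hr => ?_⟩
  rw [besselErr_eq_besselErrAt, show -((n : ℝ) + 1) / 2 = -(((n : ℝ) - 3) / 2 + 2) by ring]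
  exact hbound r hr

/-- For `n ≥ 2`, `E(r)` satisfies `|E(r)| ≤ C_n r^{-(n+1)/2}` for all `r ≥ 1`, with a
constant `C_n` depending only on `n`. -/
theorem besselErr_bound (n : ℕ) (hn : 2 ≤ n) :
    ∃ C : ℝ, 0 < C ∧ ∀ r : ℝ, 1 ≤ r →
      ‖besselErr n r‖ ≤ C * r ^ (-((n : ℝ) + 1) / 2) :=
  besselErr_bound_general n
end

section
/- (Hölder inequality in Lorentz spaces) Let 0 < p₁, p₂, p < ∞ and 0 < q₁, q₂, q ≤ ∞ satisfy 1/p = 1/p₁ + 1/p₂ and 1/q = 1/q₁ + 1/q₂. Then for measurable functions f, g on a measure space, ‖fg‖_{L^{p,q}} ≤ C ‖f‖_{L^{p₁,q₁}} ‖g‖_{L^{p₂,q₂}} whenever the right-hand side is finite, with C depending only on the exponents. -/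
/-!
Pass to the decreasing rearrangement `f^*(t) = inf {s ≥ 0 | μ {‖f‖ > s} ≤ t}`. Integrating
`λ^(r-1) t^(r/p-1)` over the region `{λ < f^*(t)} = {t < μ {‖f‖ > λ}}` in either order shows
that `‖f‖_{L^{p,q}}` is a constant `K(p,q)` times the `L^q(dt/t)` norm of `t^(1/p) f^*(t)` on
`(0,∞)`; for `q = ∞` the two suprema simply coincide. Since `(fg)^*(t) ≤ f^*(t/2) g^*(t/2)` and
`dt/t` is invariant under `t ↦ t/2`, the inequality reduces to Hölder's inequality in
`L^q(dt/t)`.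
-/

open MeasureTheory ENNReal

/-- The Lorentz quasinorm
`‖f‖_{L^{p,q}} = ((q/p)∫₀^∞ (λ μ{|f| > λ}^{1/p})^q dλ/λ)^{1/q}`, with the weak-`L^p`
modification `sup_λ λ μ{|f|>λ}^{1/p}` when `q = ∞`. -/
noncomputable def lorentzNorm {α : Type*} [MeasurableSpace α] (μ : Measure α)
    (f : α → ℂ) (p : ℝ) (q : ℝ≥0∞) : ℝ≥0∞ :=
  if q = ∞ then ⨆ (l : ℝ) (_ : 0 < l), ENNReal.ofReal l * (μ {x | l < ‖f x‖}) ^ (1 / p)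
  else (ENNReal.ofReal (q.toReal / p) *
      ∫⁻ l in Set.Ioi (0 : ℝ),
        (ENNReal.ofReal l * (μ {x | l < ‖f x‖}) ^ (1 / p)) ^ q.toReal /
          ENNReal.ofReal l) ^ (1 / q.toReal)

open NNReal Set

theorem lintegral_Ioi_ofReal_rpow_eq_top (s : ℝ) :
    ∫⁻ t in Ioi (0 : ℝ), ENNReal.ofReal (t ^ s) = ⊤ := by
  by_contra h
  refine not_integrableOn_Ioi_rpow s ?_
  refine (integrable_toReal_of_lintegral_ne_top (by fun_prop) h).congr ?_
  filter_upwards [self_mem_ae_restrict measurableSet_Ioi] with t ht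
  exact ENNReal.toReal_ofReal (Real.rpow_nonneg (le_of_lt ht) _)

theorem ofReal_mul_lintegral_indicator_rpow (x c : ℝ≥0∞) {r : ℝ} (hr : 0 < r) :
    ENNReal.ofReal r * ∫⁻ t in Ioi (0 : ℝ), {t : ℝ | ENNReal.ofReal t < x}.indicator
      (fun t => ENNReal.ofReal t ^ (r - 1) * c) t = x ^ r * c := by
  have hmeas : MeasurableSet {t : ℝ | ENNReal.ofReal t < x} :=
    measurableSet_lt ENNReal.measurable_ofReal measurable_const
  simp_rw [indicator_mul_const]
  rw [lintegral_mul_const _ ((by fun_prop : Measurable fun t : ℝ =>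
    ENNReal.ofReal t ^ (r - 1)).indicator hmeas), ← mul_assoc]
  congr 1
  have hcongr : ∀ s : Set ℝ, MeasurableSet s → s ⊆ Ioi 0 →
      ∫⁻ t in s, ENNReal.ofReal t ^ (r - 1) = ∫⁻ t in s, ENNReal.ofReal (t ^ (r - 1)) :=
    fun s hs hs0 => setLIntegral_congr_fun hs fun t ht => ENNReal.ofReal_rpow_of_pos (hs0 ht)
  rcases eq_or_ne x ⊤ with rfl | hx
  · simp only [ENNReal.ofReal_lt_top, ofPred_true, indicator_univ]
    rw [hcongr _ measurableSet_Ioi subset_rfl, lintegral_Ioi_ofReal_rpow_eq_top,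
      ENNReal.top_rpow_of_pos hr, ENNReal.mul_top (by simpa using hr)]
  · have hset : Ioi (0 : ℝ) ∩ {t | ENNReal.ofReal t < x} = Ioo 0 x.toReal := by
      ext t
      simp only [mem_inter_iff, mem_Ioi, mem_ofPred_eq, mem_Ioo, and_congr_right_iff]
      exact fun ht => ENNReal.ofReal_lt_iff_lt_toReal ht.le hx
    rw [← lintegral_indicator measurableSet_Ioi, indicator_indicator,
      lintegral_indicator (measurableSet_Ioi.inter hmeas), hset,
      hcongr _ measurableSet_Ioo Ioo_subset_Ioi_self, ← ofReal_integral_eq_lintegral_ofReal]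
    · rw [integral_Ioc_eq_integral_Ioo.symm, ← intervalIntegral.integral_of_le toReal_nonneg,
        integral_rpow (Or.inl (by linarith)), sub_add_cancel, Real.zero_rpow hr.ne', sub_zero,
        ← ENNReal.ofReal_mul hr.le, mul_div_cancel₀ _ hr.ne',
        ← ENNReal.ofReal_rpow_of_nonneg toReal_nonneg hr.le, ENNReal.ofReal_toReal hx]
    · exact (intervalIntegral.intervalIntegrable_rpow' (by linarith)).1.mono_set
        Ioo_subset_Ioc_self
    · filter_upwards [self_mem_ae_restrict measurableSet_Ioo] with t ht
      exact Real.rpow_nonneg ht.1.le _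

section Rearrangement

variable {α E : Type*} [MeasurableSpace α] [Norm E] (μ : Measure α) (f : α → E)

noncomputable def rearrangement (t : ℝ) : ℝ≥0∞ :=
  ⨅ (s : ℝ≥0) (_ : μ {x | (s : ℝ) < ‖f x‖} ≤ ENNReal.ofReal t), (s : ℝ≥0∞)

theorem antitone_rearrangement : Antitone (rearrangement μ f) := fun _ _ h =>
  le_iInf₂ fun s hs => iInf₂_le s (hs.trans (ENNReal.ofReal_le_ofReal h))

@[fun_prop]
theorem measurable_rearrangement : Measurable (rearrangement μ f) :=
  (antitone_rearrangement μ f).measurable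

theorem rearrangement_le {t : ℝ} {s : ℝ≥0}
    (hs : μ {x | (s : ℝ) < ‖f x‖} ≤ ENNReal.ofReal t) : rearrangement μ f t ≤ s :=
  iInf₂_le s hs

theorem measure_lt_norm_antitone : Antitone fun l : ℝ => μ {x | l < ‖f x‖} :=
  fun _ _ h => measure_mono fun _ hx => h.trans_lt hx

theorem exists_pos_lt_measure_add_lt_norm {l : ℝ} {u : ℝ≥0∞} (hu : u < μ {x | l < ‖f x‖}) :
    ∃ ε > 0, u < μ {x | l + ε < ‖f x‖} := by
  have hunion : {x | l < ‖f x‖} = ⋃ n : ℕ, {x | l + 1 / ((n : ℝ) + 1) < ‖f x‖} := by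
    ext x
    simp only [mem_ofPred_eq, mem_iUnion]
    constructor
    · intro h
      obtain ⟨n, hn⟩ := exists_nat_one_div_lt (sub_pos.mpr h)
      exact ⟨n, by linarith⟩
    · rintro ⟨n, hn⟩
      have : (0 : ℝ) < 1 / ((n : ℝ) + 1) := by positivity
      linarith
  have hmono : Monotone fun n : ℕ => {x | l + 1 / ((n : ℝ) + 1) < ‖f x‖} := by
    intro m n hmn x (hx : l + 1 / ((m : ℝ) + 1) < ‖f x‖)
    have : 1 / ((n : ℝ) + 1) ≤ 1 / ((m : ℝ) + 1) := by gcongr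
    exact lt_of_le_of_lt (by linarith) hx
  rw [hunion, hmono.measure_iUnion] at hu
  obtain ⟨n, hn⟩ := lt_iSup_iff.mp hu
  exact ⟨_, by positivity, hn⟩

theorem rearrangement_le_iff {t : ℝ} {s : ℝ≥0} :
    rearrangement μ f t ≤ s ↔ μ {x | (s : ℝ) < ‖f x‖} ≤ ENNReal.ofReal t := by
  refine ⟨fun h => ?_, rearrangement_le μ f⟩
  by_contra! hlt
  obtain ⟨ε, hε, hε'⟩ := exists_pos_lt_measure_add_lt_norm μ f hlt
  have hgap : ((s + ε.toNNReal : ℝ≥0) : ℝ≥0∞) ≤ rearrangement μ f t := by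
    refine le_iInf₂ fun s' hs' => ENNReal.coe_le_coe.mpr ?_
    by_contra! hs's
    have : (s' : ℝ) ≤ s + ε := by
      simpa [Real.coe_toNNReal _ hε.le] using NNReal.coe_le_coe.mpr hs's.le
    exact (hε'.trans_le (measure_lt_norm_antitone μ f this)).not_ge hs'
  have : (s : ℝ≥0∞) < ((s + ε.toNNReal : ℝ≥0) : ℝ≥0∞) := by
    exact_mod_cast lt_add_of_pos_right s (Real.toNNReal_pos.mpr hε)
  exact (this.trans_le hgap).not_ge h

theorem ofReal_lt_rearrangement_iff {l t : ℝ} (hl : 0 ≤ l) :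
    ENNReal.ofReal l < rearrangement μ f t ↔ ENNReal.ofReal t < μ {x | l < ‖f x‖} := by
  have := (rearrangement_le_iff μ f (t := t) (s := l.toNNReal)).not
  rw [Real.coe_toNNReal l hl, not_le, not_le] at this
  exact this

theorem ofReal_mul_lintegral_rearrangement_rpow {a r : ℝ} (ha : 0 < a) (hr : 0 < r) :
    ENNReal.ofReal a * ∫⁻ t in Ioi (0 : ℝ), ENNReal.ofReal t ^ (a - 1) * rearrangement μ f t ^ r =
      ENNReal.ofReal r *
        ∫⁻ l in Ioi (0 : ℝ), ENNReal.ofReal l ^ (r - 1) * μ {x | l < ‖f x‖} ^ a := by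
  set F : ℝ × ℝ → ℝ≥0∞ := {z | ENNReal.ofReal z.1 < rearrangement μ f z.2}.indicator
    fun z => ENNReal.ofReal z.1 ^ (r - 1) * ENNReal.ofReal z.2 ^ (a - 1)
  have hF : Measurable F := (by fun_prop : Measurable fun z : ℝ × ℝ =>
    ENNReal.ofReal z.1 ^ (r - 1) * ENNReal.ofReal z.2 ^ (a - 1)).indicator
      (measurableSet_lt (by fun_prop) ((measurable_rearrangement μ f).comp measurable_snd))
  have hslice_t : ∀ t, ENNReal.ofReal r * ∫⁻ l in Ioi 0, F (l, t) =
      ENNReal.ofReal t ^ (a - 1) * rearrangement μ f t ^ r := fun t => by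
    rw [mul_comm _ (_ ^ r), ← ofReal_mul_lintegral_indicator_rpow _ _ hr]
    rfl
  have hslice_l : ∀ l ∈ Ioi (0 : ℝ), ENNReal.ofReal a * ∫⁻ t in Ioi 0, F (l, t) =
      ENNReal.ofReal l ^ (r - 1) * μ {x | l < ‖f x‖} ^ a := fun l hl => by
    have hregion : {t : ℝ | ENNReal.ofReal t < μ {x | l < ‖f x‖}} =
        {t | ENNReal.ofReal l < rearrangement μ f t} :=
      ext fun t => (ofReal_lt_rearrangement_iff μ f hl.le).symm
    rw [mul_comm _ (_ ^ a), ← ofReal_mul_lintegral_indicator_rpow _ _ ha, hregion]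
    simp_rw [mul_comm (ENNReal.ofReal _ ^ (a - 1))]
    rfl
  calc ENNReal.ofReal a * ∫⁻ t in Ioi 0, ENNReal.ofReal t ^ (a - 1) * rearrangement μ f t ^ r
      = ENNReal.ofReal a * ∫⁻ t in Ioi 0, ENNReal.ofReal r * ∫⁻ l in Ioi 0, F (l, t) := by
        simp_rw [hslice_t]
    _ = ENNReal.ofReal r * ∫⁻ l in Ioi 0, ENNReal.ofReal a * ∫⁻ t in Ioi 0, F (l, t) := by
        rw [lintegral_const_mul' _ _ ofReal_ne_top, lintegral_const_mul' _ _ ofReal_ne_top,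
          lintegral_lintegral_swap (f := fun t l => F (l, t))
            (hF.comp measurable_swap).aemeasurable, mul_left_comm]
    _ = ENNReal.ofReal r *
          ∫⁻ l in Ioi 0, ENNReal.ofReal l ^ (r - 1) * μ {x | l < ‖f x‖} ^ a := by
        rw [setLIntegral_congr_fun measurableSet_Ioi hslice_l]

end Rearrangement

section Product

variable {α R : Type*} [MeasurableSpace α] [NonUnitalSeminormedRing R] (μ : Measure α)

theorem rearrangement_mul_le (f g : α → R) {t₁ t₂ : ℝ} (h₁ : 0 ≤ t₁) (h₂ : 0 ≤ t₂) :
    rearrangement μ (fun x => f x * g x) (t₁ + t₂) ≤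
      rearrangement μ f t₁ * rearrangement μ g t₂ := by
  have hsplit : ∀ a b : ℝ≥0, {x | ((a * b : ℝ≥0) : ℝ) < ‖f x * g x‖} ⊆
      {x | (a : ℝ) < ‖f x‖} ∪ {x | (b : ℝ) < ‖g x‖} := by
    intro a b x hx
    by_contra! h
    simp only [mem_union, mem_ofPred_eq, not_or, not_lt] at h
    have := (norm_mul_le (f x) (g x)).trans (mul_le_mul h.1 h.2 (norm_nonneg _) a.2)
    exact (lt_of_lt_of_le hx (by simpa using this)).false
  have ht : ENNReal.ofReal t₁ + ENNReal.ofReal t₂ = ENNReal.ofReal (t₁ + t₂) :=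
    (ENNReal.ofReal_add h₁ h₂).symm
  rcases eq_or_ne (rearrangement μ f t₁) 0 with hf0 | hf0
  · rw [hf0, zero_mul, ← ENNReal.coe_zero]
    refine rearrangement_le μ _ ?_
    have hf := (rearrangement_le_iff μ f (t := t₁) (s := 0)).mp (by simp [hf0])
    refine (measure_mono fun x hx => ?_).trans (hf.trans (ENNReal.ofReal_le_ofReal (by linarith)))
    simp only [mem_ofPred_eq, NNReal.coe_zero] at hx ⊢
    by_contra! h
    have := (norm_mul_le (f x) (g x)).trans (mul_nonpos_of_nonpos_of_nonneg h (norm_nonneg _))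
    linarith
  rcases eq_or_ne (rearrangement μ g t₂) 0 with hg0 | hg0
  · rw [hg0, mul_zero, ← ENNReal.coe_zero]
    refine rearrangement_le μ _ ?_
    have hg := (rearrangement_le_iff μ g (t := t₂) (s := 0)).mp (by simp [hg0])
    refine (measure_mono fun x hx => ?_).trans (hg.trans (ENNReal.ofReal_le_ofReal (by linarith)))
    simp only [mem_ofPred_eq, NNReal.coe_zero] at hx ⊢
    by_contra! h
    have := (norm_mul_le (f x) (g x)).trans (mul_nonpos_of_nonneg_of_nonpos (norm_nonneg _) h)
    linarith
  rcases eq_or_ne (rearrangement μ f t₁) ⊤ with hft | hft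
  · simp [hft, hg0]
  rcases eq_or_ne (rearrangement μ g t₂) ⊤ with hgt | hgt
  · simp [hgt, hf0]
  lift rearrangement μ f t₁ to ℝ≥0 using hft with a ha
  lift rearrangement μ g t₂ to ℝ≥0 using hgt with b hb
  rw [← ENNReal.coe_mul]
  refine rearrangement_le μ _ ((measure_mono (hsplit a b)).trans ((measure_union_le _ _).trans ?_))
  rw [← ht]
  exact add_le_add ((rearrangement_le_iff μ f).mp ha.ge) ((rearrangement_le_iff μ g).mp hb.ge)

end Product

/-- The `L^q` norm on `(0, ∞)` for the Haar measure `dt / t` of the multiplicative group,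
with the pointwise (not the essential) supremum when `q = ∞`. -/
noncomputable def haarLpNorm (φ : ℝ → ℝ≥0∞) (q : ℝ≥0∞) : ℝ≥0∞ :=
  if q = ∞ then ⨆ (t : ℝ) (_ : 0 < t), φ t
  else (∫⁻ t in Ioi (0 : ℝ), φ t ^ q.toReal / ENNReal.ofReal t) ^ (1 / q.toReal)

theorem le_haarLpNorm_top (φ : ℝ → ℝ≥0∞) {t : ℝ} (ht : 0 < t) : φ t ≤ haarLpNorm φ ∞ := by
  rw [haarLpNorm, if_pos rfl]
  exact le_iSup₂ (f := fun t (_ : 0 < t) => φ t) t ht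

theorem haarLpNorm_mono {φ ψ : ℝ → ℝ≥0∞} (h : ∀ t, 0 < t → φ t ≤ ψ t) (q : ℝ≥0∞) :
    haarLpNorm φ q ≤ haarLpNorm ψ q := by
  unfold haarLpNorm
  split_ifs
  · exact iSup₂_mono h
  · gcongr ?_ ^ _
    exact setLIntegral_mono' measurableSet_Ioi fun t ht => by gcongr; exact h t ht

theorem haarLpNorm_const_mul {φ : ℝ → ℝ≥0∞} (hφ : Measurable φ) (c : ℝ≥0∞) {q : ℝ≥0∞}
    (hq : q ≠ 0) : haarLpNorm (fun t => c * φ t) q = c * haarLpNorm φ q := by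
  unfold haarLpNorm
  split_ifs with hq'
  · simp_rw [ENNReal.mul_iSup]
  · have hr : 0 < q.toReal := toReal_pos hq hq'
    simp_rw [ENNReal.mul_rpow_of_nonneg _ _ hr.le, mul_div_assoc]
    rw [lintegral_const_mul _ (by fun_prop), ENNReal.mul_rpow_of_nonneg _ _ (by positivity),
      ← ENNReal.rpow_mul, mul_one_div_cancel hr.ne', ENNReal.rpow_one]

theorem lintegral_Ioi_comp_mul_left (F : ℝ → ℝ≥0∞) {c : ℝ} (hc : 0 < c) :
    ∫⁻ t in Ioi 0, F (c * t) = (ENNReal.ofReal c)⁻¹ * ∫⁻ t in Ioi 0, F t := by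
  have he := measurableEmbedding_mulLeft₀ hc.ne'
  have hpre : (c * ·) ⁻¹' Ioi 0 = Ioi (0 : ℝ) := by
    ext t
    simp [mul_pos_iff_of_pos_left hc]
  rw [← he.lintegral_map]
  conv_lhs => rw [← hpre, ← he.restrict_map, Real.map_volume_mul_left hc.ne']
  rw [Measure.restrict_smul, lintegral_smul_measure, abs_of_pos (inv_pos.mpr hc),
    ENNReal.ofReal_inv_of_pos hc, smul_eq_mul]

theorem haarLpNorm_comp_mul_left (φ : ℝ → ℝ≥0∞) {c : ℝ} (hc : 0 < c) (q : ℝ≥0∞) :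
    haarLpNorm (fun t => φ (c * t)) q = haarLpNorm φ q := by
  unfold haarLpNorm
  split_ifs
  · refine le_antisymm (iSup₂_le fun t ht => le_iSup₂_of_le (c * t) (by positivity) le_rfl)
      (iSup₂_le fun s hs => le_iSup₂_of_le (s / c) (by positivity) ?_)
    show φ s ≤ φ (c * (s / c))
    rw [mul_div_cancel₀ _ hc.ne']
  · congr 1
    have hc' : ENNReal.ofReal c ≠ 0 := by simpa using hc
    have hscale : ∀ t, φ (c * t) ^ q.toReal / ENNReal.ofReal t =
        ENNReal.ofReal c * (φ (c * t) ^ q.toReal / ENNReal.ofReal (c * t)) := by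
      intro t
      rw [ENNReal.ofReal_mul hc.le, ← mul_div_assoc,
        ENNReal.mul_div_mul_left _ _ hc' ofReal_ne_top]
    simp_rw [hscale]
    rw [lintegral_const_mul' _ _ ofReal_ne_top,
      lintegral_Ioi_comp_mul_left (fun s => φ s ^ q.toReal / ENNReal.ofReal s) hc,
      ← mul_assoc, ENNReal.mul_inv_cancel hc' ofReal_ne_top, one_mul]

theorem lintegral_Ioi_div_ofReal {G : ℝ → ℝ≥0∞} (hG : Measurable G) :
    ∫⁻ t in Ioi 0, G t / ENNReal.ofReal t =
      ∫⁻ t, G t ∂(volume.restrict (Ioi 0)).withDensity fun t => (ENNReal.ofReal t)⁻¹ := by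
  rw [lintegral_withDensity_eq_lintegral_mul _ (by fun_prop) hG]
  simp_rw [div_eq_mul_inv, mul_comm (G _)]
  rfl

theorem haarLpNorm_mul_le {φ ψ : ℝ → ℝ≥0∞} (hφ : Measurable φ) (hψ : Measurable ψ)
    {q q₁ q₂ : ℝ≥0∞} (hq : q ≠ 0) (hsum : q⁻¹ = q₁⁻¹ + q₂⁻¹) :
    haarLpNorm (fun t => φ t * ψ t) q ≤ haarLpNorm φ q₁ * haarLpNorm ψ q₂ := by
  rcases eq_or_ne q₁ ∞ with rfl | hq₁
  · obtain rfl : q₂ = q := by simpa using hsum.symm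
    rw [← haarLpNorm_const_mul hψ _ hq]
    exact haarLpNorm_mono (fun t ht => by gcongr; exact le_haarLpNorm_top φ ht) _
  rcases eq_or_ne q₂ ∞ with rfl | hq₂
  · obtain rfl : q₁ = q := by simpa using hsum.symm
    rw [mul_comm, ← haarLpNorm_const_mul hφ _ hq]
    exact haarLpNorm_mono (fun t ht => by rw [mul_comm]; gcongr; exact le_haarLpNorm_top ψ ht) _
  have hq' : q ≠ ∞ := by
    intro h
    simp only [h, inv_top] at hsum
    exact hq₁ (ENNReal.inv_eq_zero.mp (add_eq_zero.mp hsum.symm).1)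
  have hq₁0 : q₁ ≠ 0 := by
    rintro rfl
    simp [hq] at hsum
  have hq₂0 : q₂ ≠ 0 := by
    rintro rfl
    simp [hq] at hsum
  have hr := toReal_pos hq hq'
  have hsum' : 1 / q.toReal = 1 / q₁.toReal + 1 / q₂.toReal := by
    have := congrArg ENNReal.toReal hsum
    rwa [ENNReal.toReal_add (inv_ne_top.mpr hq₁0) (inv_ne_top.mpr hq₂0), toReal_inv, toReal_inv,
      toReal_inv, ← one_div, ← one_div, ← one_div] at this
  have hlt : q.toReal < q₁.toReal := by
    refine lt_of_one_div_lt_one_div (toReal_pos hq₁0 hq₁) ?_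
    rw [hsum']
    exact lt_add_of_pos_right _ (one_div_pos.mpr (toReal_pos hq₂0 hq₂))
  simp only [haarLpNorm, if_neg hq', if_neg hq₁, if_neg hq₂]
  rw [lintegral_Ioi_div_ofReal (by fun_prop), lintegral_Ioi_div_ofReal (by fun_prop),
    lintegral_Ioi_div_ofReal (by fun_prop)]
  exact ENNReal.lintegral_Lp_mul_le_Lq_mul_Lr hr hlt hsum' _ hφ.aemeasurable hψ.aemeasurable

theorem rpow_mul_div_ofReal {t : ℝ} (ht : 0 < t) (s : ℝ) (x : ℝ≥0∞) {r : ℝ} (hr : 0 ≤ r) :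
    (ENNReal.ofReal t ^ s * x) ^ r / ENNReal.ofReal t = ENNReal.ofReal t ^ (s * r - 1) * x ^ r := by
  have ht' : ENNReal.ofReal t ≠ 0 := by simpa using ht
  rw [ENNReal.mul_rpow_of_nonneg _ _ hr, ← ENNReal.rpow_mul, div_eq_mul_inv, mul_right_comm,
    ENNReal.rpow_sub _ _ ht' ofReal_ne_top, ENNReal.rpow_one, div_eq_mul_inv]

section Lorentz

variable {α E : Type*} [MeasurableSpace α] [Norm E] (μ : Measure α)

noncomputable def weightedRearrangement (f : α → E) (p t : ℝ) : ℝ≥0∞ :=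
  ENNReal.ofReal t ^ (1 / p) * rearrangement μ f t

@[fun_prop]
theorem measurable_weightedRearrangement (f : α → E) (p : ℝ) :
    Measurable (weightedRearrangement μ f p) :=
  (ENNReal.measurable_ofReal.pow_const _).mul (measurable_rearrangement μ f)

theorem iSup_weightedRearrangement (f : α → E) {p : ℝ} (hp : 0 < p) :
    ⨆ (t : ℝ) (_ : 0 < t), weightedRearrangement μ f p t =
      ⨆ (l : ℝ) (_ : 0 < l), ENNReal.ofReal l * μ {x | l < ‖f x‖} ^ (1 / p) := by
  apply le_antisymm
  · refine iSup₂_le fun t ht => ENNReal.mul_le_of_forall_lt fun a ha b hb => ?_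
    rcases eq_or_ne b 0 with rfl | hb0
    · simp
    have hs : 0 < b.toReal := toReal_pos hb0 hb.ne_top
    have hd : ENNReal.ofReal t < μ {x | b.toReal < ‖f x‖} :=
      (ofReal_lt_rearrangement_iff μ f hs.le).mp (by rwa [ofReal_toReal hb.ne_top])
    calc a * b ≤ ENNReal.ofReal b.toReal * μ {x | b.toReal < ‖f x‖} ^ (1 / p) := by
          rw [ofReal_toReal hb.ne_top, mul_comm]
          gcongr
          exact ha.le.trans (by gcongr)
      _ ≤ _ := le_iSup₂ (f := fun (l : ℝ) (_ : 0 < l) =>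
          ENNReal.ofReal l * μ {x | l < ‖f x‖} ^ (1 / p)) _ hs
  · refine iSup₂_le fun l hl => ENNReal.mul_le_of_forall_lt fun a ha b hb => ?_
    rcases eq_or_ne b 0 with rfl | hb0
    · simp
    have hbp : b ^ p ≠ ⊤ := rpow_ne_top_of_nonneg hp.le hb.ne_top
    have ht : 0 < (b ^ p).toReal := toReal_pos (by simp [hb0, hp, hb.ne_top]) hbp
    have hd : ENNReal.ofReal (b ^ p).toReal < μ {x | l < ‖f x‖} := by
      rw [ofReal_toReal hbp, ← ENNReal.lt_rpow_inv_iff hp, ← one_div]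
      exact hb
    calc a * b ≤ ENNReal.ofReal (b ^ p).toReal ^ (1 / p) * rearrangement μ f (b ^ p).toReal := by
          rw [ofReal_toReal hbp, ← ENNReal.rpow_mul, mul_one_div_cancel hp.ne', ENNReal.rpow_one,
            mul_comm]
          gcongr
          exact ha.le.trans ((ofReal_lt_rearrangement_iff μ f hl.le).mpr hd).le
      _ ≤ _ := le_iSup₂ (f := fun (t : ℝ) (_ : 0 < t) => weightedRearrangement μ f p t) _ ht

theorem lintegral_weightedRearrangement_rpow (f : α → E) {p r : ℝ}
    (hp : 0 < p) (hr : 0 < r) :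
    ∫⁻ t in Ioi 0, weightedRearrangement μ f p t ^ r / ENNReal.ofReal t =
      ENNReal.ofReal p * ∫⁻ l in Ioi 0,
        (ENNReal.ofReal l * μ {x | l < ‖f x‖} ^ (1 / p)) ^ r / ENNReal.ofReal l := by
  have hΦ : ∀ t ∈ Ioi (0 : ℝ), weightedRearrangement μ f p t ^ r / ENNReal.ofReal t =
      ENNReal.ofReal t ^ (r / p - 1) * rearrangement μ f t ^ r := fun t ht => by
    rw [weightedRearrangement, rpow_mul_div_ofReal ht _ _ hr.le, one_div_mul_eq_div]
  have hψ : ∀ l ∈ Ioi (0 : ℝ), (ENNReal.ofReal l * μ {x | l < ‖f x‖} ^ (1 / p)) ^ r /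
      ENNReal.ofReal l = ENNReal.ofReal l ^ (r - 1) * μ {x | l < ‖f x‖} ^ (r / p) := fun l hl => by
    have h := rpow_mul_div_ofReal hl 1 (μ {x | l < ‖f x‖} ^ (1 / p)) hr.le
    rw [ENNReal.rpow_one, one_mul] at h
    rw [h, ← ENNReal.rpow_mul, one_div_mul_eq_div]
  have hrp : 0 < r / p := div_pos hr hp
  have hfubini := ofReal_mul_lintegral_rearrangement_rpow μ f hrp hr
  rw [setLIntegral_congr_fun measurableSet_Ioi hΦ, setLIntegral_congr_fun measurableSet_Ioi hψ,
    ← ENNReal.mul_right_inj (a := ENNReal.ofReal (r / p)) (by simpa using hrp) ofReal_ne_top,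
    hfubini, ← mul_assoc, ← ENNReal.ofReal_mul hrp.le, div_mul_cancel₀ _ hp.ne']

noncomputable def lorentzConst (p : ℝ) (q : ℝ≥0∞) : ℝ :=
  if q = ∞ then 1 else (q.toReal / p ^ 2) ^ (1 / q.toReal)

theorem lorentzConst_pos {p : ℝ} (hp : 0 < p) {q : ℝ≥0∞} (hq : q ≠ 0) : 0 < lorentzConst p q := by
  unfold lorentzConst
  split_ifs with hq'
  · exact one_pos
  · exact Real.rpow_pos_of_pos (div_pos (toReal_pos hq hq') (by positivity)) _

theorem lorentzNorm_eq_ofReal_mul_haarLpNorm (f : α → ℂ) {p : ℝ} (hp : 0 < p) {q : ℝ≥0∞}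
    (hq : q ≠ 0) :
    lorentzNorm μ f p q =
      ENNReal.ofReal (lorentzConst p q) * haarLpNorm (weightedRearrangement μ f p) q := by
  unfold lorentzNorm haarLpNorm lorentzConst
  split_ifs with hq'
  · rw [ENNReal.ofReal_one, one_mul, iSup_weightedRearrangement μ f hp]
  · have hr : 0 < q.toReal := toReal_pos hq hq'
    rw [lintegral_weightedRearrangement_rpow μ f hp hr,
      ← ENNReal.ofReal_rpow_of_nonneg (by positivity) (by positivity),
      ← ENNReal.mul_rpow_of_nonneg _ _ (by positivity), ← mul_assoc,
      ← ENNReal.ofReal_mul (by positivity)]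
    congr 3
    field_simp

theorem weightedRearrangement_mul_le {R : Type*} [NonUnitalSeminormedRing R] (f g : α → R)
    {p₁ p₂ p : ℝ} (hp₁ : 0 < p₁) (hp₂ : 0 < p₂) (hpsum : 1 / p = 1 / p₁ + 1 / p₂) {t : ℝ}
    (ht : 0 < t) :
    weightedRearrangement μ (fun x => f x * g x) p t ≤
      ENNReal.ofReal (2 ^ (1 / p)) * (weightedRearrangement μ f p₁ (2⁻¹ * t) *
        weightedRearrangement μ g p₂ (2⁻¹ * t)) := by
  have ht2 : 0 < 2⁻¹ * t := by positivity
  have hp : 0 ≤ 1 / p := by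
    rw [hpsum]
    positivity
  have hweight : ENNReal.ofReal t ^ (1 / p) = ENNReal.ofReal (2 ^ (1 / p)) *
      (ENNReal.ofReal (2⁻¹ * t) ^ (1 / p₁) * ENNReal.ofReal (2⁻¹ * t) ^ (1 / p₂)) := by
    rw [← ENNReal.rpow_add _ _ (by simpa using ht2) ofReal_ne_top, ← hpsum,
      ← ENNReal.ofReal_rpow_of_pos two_pos, ← ENNReal.mul_rpow_of_nonneg _ _ hp,
      ← ENNReal.ofReal_mul zero_le_two, mul_inv_cancel_left₀ two_ne_zero]
  have hsplit := rearrangement_mul_le μ f g ht2.le ht2.le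
  rw [← two_mul, mul_inv_cancel_left₀ two_ne_zero] at hsplit
  calc weightedRearrangement μ (fun x => f x * g x) p t
      ≤ ENNReal.ofReal t ^ (1 / p) *
          (rearrangement μ f (2⁻¹ * t) * rearrangement μ g (2⁻¹ * t)) := by
        unfold weightedRearrangement
        gcongr
    _ = _ := by
        rw [hweight, weightedRearrangement, weightedRearrangement]
        ring

theorem lorentzNorm_mul_le (f g : α → ℂ) {p₁ p₂ p : ℝ} {q₁ q₂ q : ℝ≥0∞}
    (hp₁ : 0 < p₁) (hp₂ : 0 < p₂) (hp : 0 < p) (hq : q ≠ 0)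
    (hpsum : 1 / p = 1 / p₁ + 1 / p₂) (hqsum : q⁻¹ = q₁⁻¹ + q₂⁻¹) :
    lorentzNorm μ (fun x => f x * g x) p q ≤ ENNReal.ofReal (lorentzConst p q) *
      (ENNReal.ofReal (2 ^ (1 / p)) * (haarLpNorm (weightedRearrangement μ f p₁) q₁ *
        haarLpNorm (weightedRearrangement μ g p₂) q₂)) := by
  set Φf := weightedRearrangement μ f p₁
  set Φg := weightedRearrangement μ g p₂
  have hhalf : (0 : ℝ) < 2⁻¹ := by norm_num
  rw [lorentzNorm_eq_ofReal_mul_haarLpNorm μ _ hp hq]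
  gcongr ENNReal.ofReal _ * ?_
  calc haarLpNorm (weightedRearrangement μ (fun x => f x * g x) p) q
      ≤ haarLpNorm (fun t => ENNReal.ofReal (2 ^ (1 / p)) * (Φf (2⁻¹ * t) * Φg (2⁻¹ * t))) q :=
        haarLpNorm_mono (fun t ht => weightedRearrangement_mul_le μ f g hp₁ hp₂ hpsum ht) q
    _ = ENNReal.ofReal (2 ^ (1 / p)) * haarLpNorm (fun t => Φf (2⁻¹ * t) * Φg (2⁻¹ * t)) q :=
        haarLpNorm_const_mul (by fun_prop) _ hq
    _ ≤ ENNReal.ofReal (2 ^ (1 / p)) *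
          (haarLpNorm (fun t => Φf (2⁻¹ * t)) q₁ * haarLpNorm (fun t => Φg (2⁻¹ * t)) q₂) := by
        gcongr
        exact haarLpNorm_mul_le (by fun_prop) (by fun_prop) hq hqsum
    _ = ENNReal.ofReal (2 ^ (1 / p)) * (haarLpNorm Φf q₁ * haarLpNorm Φg q₂) := by
        rw [haarLpNorm_comp_mul_left Φf hhalf, haarLpNorm_comp_mul_left Φg hhalf]

end Lorentz

/-- Hölder inequality in Lorentz spaces: if `1/p = 1/p₁ + 1/p₂` and
`1/q = 1/q₁ + 1/q₂` with `0 < p₁, p₂, p < ∞`, `0 < q₁, q₂, q ≤ ∞`, then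
`‖fg‖_{L^{p,q}} ≤ C ‖f‖_{L^{p₁,q₁}} ‖g‖_{L^{p₂,q₂}}` whenever the right-hand side is
finite, with `C` depending only on the exponents. -/
theorem lorentz_holder (p₁ p₂ p : ℝ) (q₁ q₂ q : ℝ≥0∞)
    (hp₁ : 0 < p₁) (hp₂ : 0 < p₂) (hp : 0 < p)
    (hq₁ : 0 < q₁) (hq₂ : 0 < q₂) (hq : 0 < q)
    (hpsum : 1 / p = 1 / p₁ + 1 / p₂) (hqsum : q⁻¹ = q₁⁻¹ + q₂⁻¹) :
    ∃ C : ℝ, 0 < C ∧ ∀ {α : Type} [MeasurableSpace α] (μ : Measure α) (f g : α → ℂ),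
      Measurable f → Measurable g →
      lorentzNorm μ f p₁ q₁ < ∞ → lorentzNorm μ g p₂ q₂ < ∞ →
      lorentzNorm μ (fun x => f x * g x) p q ≤
        ENNReal.ofReal C * (lorentzNorm μ f p₁ q₁ * lorentzNorm μ g p₂ q₂) := by
  set K := lorentzConst p q
  set K₁ := lorentzConst p₁ q₁
  set K₂ := lorentzConst p₂ q₂
  have hK : 0 < K := lorentzConst_pos hp hq.ne'
  have hK₁ : 0 < K₁ := lorentzConst_pos hp₁ hq₁.ne'
  have hK₂ : 0 < K₂ := lorentzConst_pos hp₂ hq₂.ne'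
  set C := 2 ^ (1 / p) * K / (K₁ * K₂) with hCdef
  have hC : 2 ^ (1 / p) * K = C * K₁ * K₂ := by
    rw [hCdef]
    field_simp
  refine ⟨C, by positivity, fun μ f g _ _ _ _ => ?_⟩
  refine (lorentzNorm_mul_le μ f g hp₁ hp₂ hp hq.ne' hpsum hqsum).trans_eq ?_
  rw [lorentzNorm_eq_ofReal_mul_haarLpNorm μ f hp₁ hq₁.ne',
    lorentzNorm_eq_ofReal_mul_haarLpNorm μ g hp₂ hq₂.ne', ← mul_assoc,
    ← ENNReal.ofReal_mul hK.le, mul_comm K, hC, ENNReal.ofReal_mul (by positivity),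
    ENNReal.ofReal_mul (by positivity)]
  ring
end
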